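/- Let m, n ∈ ℤ³ \ {0} and a, b ∈ ℝ³ with ⟨a, m⟩ = 0 and ⟨b, n⟩ = 0, and let u(x) := a·cos⟨m,x⟩ + b·cos⟨n,x⟩. Then 2·B(u) is the field x ↦ sin⟨m−n, x⟩ · P_{m−n}(⟨a,n⟩b − ⟨b,m⟩a) − sin⟨m+n, x⟩ · P_{m+n}(⟨a,n⟩b + ⟨b,m⟩a). -/

import Mathlib

open MeasureTheory Set

noncomputable section

/-- Vector fields on `ℝ³`, with `ℝ³ = Fin 3 → ℝ`. -/
abbrev V3 := Fin 3 → ℝ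

/-- The Euclidean inner product on `ℝ³`. -/
def dot3 (a b : V3) : ℝ := ∑ i, a i * b i

/-- Embedding of `ℤ³` into `ℝ³`. -/
def toR (m : Fin 3 → ℤ) : V3 := fun i => (m i : ℝ)

/-- `2π`-periodic vector field. -/
def PerField (v : V3 → V3) : Prop :=
  ∀ (x : V3) (k : Fin 3 → ℤ), v (x + (2 * Real.pi) • toR k) = v x

/-- `2π`-periodic scalar function. -/
def PerFun (p : V3 → ℝ) : Prop :=
  ∀ (x : V3) (k : Fin 3 → ℤ), p (x + (2 * Real.pi) • toR k) = p x

/-- The fundamental cell `[0,2π]³`. -/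
def Box3 : Set V3 := Set.univ.pi fun _ => Icc (0 : ℝ) (2 * Real.pi)

/-- Divergence-free vector field. -/
def DivFree3 (v : V3 → V3) : Prop :=
  ∀ x, (∑ i, fderiv ℝ v x (Pi.single i 1) i) = 0

/-- Zero mean over the fundamental cell. -/
def ZeroMean3 (v : V3 → V3) : Prop := (∫ x in Box3, v x) = 0

/-- Smooth periodic divergence-free zero-mean vector field. -/
def GoodField (v : V3 → V3) : Prop :=
  ContDiff ℝ (⊤ : ℕ∞) v ∧ PerField v ∧ DivFree3 v ∧ ZeroMean3 v

/-- The gradient of a scalar function. -/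
def grad3 (p : V3 → ℝ) (x : V3) : V3 := fun i => fderiv ℝ p x (Pi.single i 1)

/-- The convective term `⟨u,∇⟩u`, i.e. `x ↦ (Du)(x) (u x)`. -/
def convTerm (u : V3 → V3) (x : V3) : V3 := fderiv ℝ u x (u x)

/-- `w` is the Leray projection `B(u)` of the convective term `⟨u,∇⟩u`: it is a smooth
periodic divergence-free zero-mean field with `⟨u,∇⟩u − w = ∇p` for some smooth
periodic `p`. -/
def IsLeray (u w : V3 → V3) : Prop :=
  GoodField w ∧ ∃ p : V3 → ℝ, ContDiff ℝ (⊤ : ℕ∞) p ∧ PerFun p ∧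
    ∀ x, convTerm u x - w x = grad3 p x

/-- The map `B` (defined by choice; for smooth periodic divergence-free zero-mean `u`
the Leray projection exists and is unique, and `Bop u` is it). -/
def Bop (u : V3 → V3) : V3 → V3 :=
  haveI := Classical.propDecidable (∃ w, IsLeray u w)
  if h : ∃ w, IsLeray u w then h.choose else 0

/-- Orthogonal projection of `ℝ³` onto `ℓ^⊥` (and `0` for `ℓ = 0`). -/
def proj3 (ℓ : V3) (v : V3) : V3 :=
  if ℓ = 0 then 0 else v - (dot3 v ℓ / dot3 ℓ ℓ) • ℓ

/-- The space `E(K)` of trigonometric divergence-free fields with frequencies in `K`: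
finite sums `x ↦ Σ_{ℓ} (a_ℓ cos⟨ℓ,x⟩ + b_ℓ sin⟨ℓ,x⟩)` with `ℓ ∈ K`, `a_ℓ, b_ℓ ⊥ ℓ`. -/
def EK (K : Set (Fin 3 → ℤ)) : Set (V3 → V3) :=
  {v | ∃ (S : Finset (Fin 3 → ℤ)) (a b : (Fin 3 → ℤ) → V3),
    ↑S ⊆ K ∧
    (∀ ℓ ∈ S, dot3 (a ℓ) (toR ℓ) = 0 ∧ dot3 (b ℓ) (toR ℓ) = 0) ∧
    v = fun x => ∑ ℓ ∈ S,
      (Real.cos (dot3 (toR ℓ) x) • a ℓ + Real.sin (dot3 (toR ℓ) x) • b ℓ)}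

/-- The set of fields of the form `η − Σᵢ B(ζⁱ)` with `η, ζⁱ ∈ E`. -/
def Sform (E : Set (V3 → V3)) : Set (V3 → V3) :=
  {η₁ | ∃ (p : ℕ) (η : V3 → V3) (ζ : Fin p → V3 → V3),
    η ∈ E ∧ (∀ i, ζ i ∈ E) ∧ η₁ = η - ∑ i, Bop (ζ i)}

/-- `F(E)`: the largest vector space all of whose elements can be written
`η − Σᵢ B(ζⁱ)` with `η, ζⁱ ∈ E`. -/
def Fop (E : Set (V3 → V3)) : Set (V3 → V3) :=
  {x | ∃ F : Submodule ℝ (V3 → V3), (F : Set (V3 → V3)) ⊆ Sform E ∧ x ∈ F}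

/-- The spaces `E₀(K) = E(K)`, `E_j(K) = F(E_{j−1}(K))`. -/
def Ej (K : Set (Fin 3 → ℤ)) : ℕ → Set (V3 → V3)
  | 0 => EK K
  | j + 1 => Fop (Ej K j)

/-- `E_∞(K) = ⋃_{j≥1} E_j(K)`. -/
def Einf (K : Set (Fin 3 → ℤ)) : Set (V3 → V3) := ⋃ j : ℕ, Ej K (j + 1)

/-- Two integer vectors are non-parallel if neither is a real multiple of the other. -/
def NonParallel (m n : Fin 3 → ℤ) : Prop :=
  (¬ ∃ c : ℝ, toR m = c • toR n) ∧ (¬ ∃ c : ℝ, toR n = c • toR m)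

-- helpers from a.lean
def dotL (l : V3) : V3 →L[ℝ] ℝ := ∑ i, l i • (ContinuousLinearMap.proj i : V3 →L[ℝ] ℝ)
lemma dotL_apply (l v : V3) : dotL l v = dot3 l v := by
  simp [dotL, dot3, ContinuousLinearMap.sum_apply]
lemma dot3_fun_eq (l : V3) : (fun y => dot3 l y) = ⇑(dotL l) := by
  funext y; rw [dotL_apply]
lemma hasFDerivAt_dot3 (l x : V3) : HasFDerivAt (fun y => dot3 l y) (dotL l) x := by
  rw [dot3_fun_eq]; exact (dotL l).hasFDerivAt
lemma contDiff_dot3 (l : V3) : ContDiff ℝ (⊤ : ℕ∞) (fun y => dot3 l y) := by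
  rw [dot3_fun_eq]; exact (dotL l).contDiff
lemma continuous_dot3 (l : V3) : Continuous (fun y => dot3 l y) := by
  rw [dot3_fun_eq]; exact (dotL l).continuous
lemma dot3_comm (a b : V3) : dot3 a b = dot3 b a := by
  simp [dot3, mul_comm]
lemma dot3_single (l : V3) (i : Fin 3) : dot3 l (Pi.single i 1) = l i := by
  simp [dot3, Pi.single_apply, Finset.sum_ite_eq]
lemma dot3_add_right (a b c : V3) : dot3 a (b + c) = dot3 a b + dot3 a c := by
  simp [dot3, mul_add, Finset.sum_add_distrib]
lemma dot3_sub_right (a b c : V3) : dot3 a (b - c) = dot3 a b - dot3 a c := by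
  simp [dot3, mul_sub, Finset.sum_sub_distrib]
lemma dot3_add_left (a b c : V3) : dot3 (a + b) c = dot3 a c + dot3 b c := by
  simp [dot3, add_mul, Finset.sum_add_distrib]
lemma dot3_sub_left (a b c : V3) : dot3 (a - b) c = dot3 a c - dot3 b c := by
  simp [dot3, sub_mul, Finset.sum_sub_distrib]
lemma dot3_smul_right (r : ℝ) (a b : V3) : dot3 a (r • b) = r * dot3 a b := by
  simp only [dot3, Pi.smul_apply, smul_eq_mul, Finset.mul_sum]
  exact Finset.sum_congr rfl fun j _ => by ring
lemma dot3_self_pos (v : V3) (h : v ≠ 0) : 0 < dot3 v v := by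
  obtain ⟨i, hi⟩ := Function.ne_iff.1 h
  have : (0:ℝ) < v i * v i := mul_self_pos.2 hi
  exact Finset.sum_pos' (fun j _ => mul_self_nonneg _) ⟨i, Finset.mem_univ i, this⟩
lemma toR_add (m n : Fin 3 → ℤ) : toR (m + n) = toR m + toR n := by
  funext i; simp [toR]
lemma toR_sub (m n : Fin 3 → ℤ) : toR (m - n) = toR m - toR n := by
  funext i; simp [toR]

lemma dot3_proj (ℓ v : V3) : dot3 ℓ (proj3 ℓ v) = 0 := by
  by_cases h : ℓ = 0
  · simp [proj3, h, dot3]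
  · rw [proj3, if_neg h, dot3_sub_right, dot3_smul_right,
      div_mul_cancel₀ _ (ne_of_gt (dot3_self_pos ℓ h)), dot3_comm, sub_self]

lemma sin_proj_key (ℓ : Fin 3 → ℤ) (c x : V3) (i : Fin 3) :
    Real.sin (dot3 (toR ℓ) x) * proj3 (toR ℓ) c i =
    Real.sin (dot3 (toR ℓ) x) * c i -
    Real.sin (dot3 (toR ℓ) x) * ((dot3 c (toR ℓ) / dot3 (toR ℓ) (toR ℓ)) * toR ℓ i) := by
  by_cases h : toR ℓ = 0
  · rw [h]; simp [proj3, dot3]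
  · rw [proj3, if_neg h]
    simp only [Pi.sub_apply, Pi.smul_apply, smul_eq_mul]
    ring

lemma dot3_int_cast (ℓ k : Fin 3 → ℤ) :
    dot3 (toR ℓ) (toR k) = ((∑ i, ℓ i * k i : ℤ) : ℝ) := by
  rw [dot3]; push_cast; exact Finset.sum_congr rfl fun j _ => by simp [toR]

lemma dot3_shift (ℓ k : Fin 3 → ℤ) (x : V3) :
    dot3 (toR ℓ) (x + (2 * Real.pi) • toR k) =
    dot3 (toR ℓ) x + ((∑ i, ℓ i * k i : ℤ) : ℝ) * (2 * Real.pi) := by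
  rw [dot3_add_right, dot3_smul_right, dot3_int_cast]; ring

lemma per_sin (ℓ k : Fin 3 → ℤ) (x : V3) :
    Real.sin (dot3 (toR ℓ) (x + (2 * Real.pi) • toR k)) = Real.sin (dot3 (toR ℓ) x) := by
  rw [dot3_shift, Real.sin_add_int_mul_two_pi]

lemma per_cos (ℓ k : Fin 3 → ℤ) (x : V3) :
    Real.cos (dot3 (toR ℓ) (x + (2 * Real.pi) • toR k)) = Real.cos (dot3 (toR ℓ) x) := by
  rw [dot3_shift, Real.cos_add_int_mul_two_pi]

-- integral section (generalized) + derivative helpers + main proof skeleton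
-- appended after c.lean content
lemma box3_measurable : MeasurableSet Box3 :=
  MeasurableSet.univ_pi fun _ => measurableSet_Icc
lemma box3_compact : IsCompact Box3 := isCompact_univ_pi fun _ => isCompact_Icc

lemma factor_zero (z : ℤ) (hz : z ≠ 0) :
    (∫ t in Icc (0:ℝ) (2*Real.pi), Complex.exp ((z:ℂ) * t * Complex.I)) = 0 := by
  have h2 : (0:ℝ) ≤ 2 * Real.pi := by positivity
  rw [integral_Icc_eq_integral_Ioc, ← intervalIntegral.integral_of_le h2]
  have hc : ((z:ℂ) * Complex.I) ≠ 0 := by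
    simp [Complex.ext_iff, Complex.I_ne_zero, hz]
  have : ∀ t : ℝ, (z:ℂ) * t * Complex.I = ((z:ℂ) * Complex.I) * t := fun t => by ring
  simp_rw [this]
  rw [integral_exp_mul_complex hc]
  have h1 : Complex.exp ((z:ℂ) * Complex.I * (2*Real.pi)) = 1 := by
    have := Complex.exp_int_mul_two_pi_mul_I z
    rw [← this]; ring_nf
  simp [h1]

lemma integral_sin_dot_zero (ℓ : Fin 3 → ℤ) :
    (∫ x in Box3, Real.sin (dot3 (toR ℓ) x)) = 0 := by
  classical
  by_cases hl : ℓ = 0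
  · subst hl
    have : ∀ x : V3, Real.sin (dot3 (toR 0) x) = 0 := fun x => by simp [toR, dot3]
    simp [this]
  set g : Fin 3 → ℝ → ℂ := fun i t =>
    (Icc (0:ℝ) (2*Real.pi)).indicator (fun s => Complex.exp ((ℓ i : ℂ) * s * Complex.I)) t with hg
  have hfact : (Box3.indicator fun x => Complex.exp ((dot3 (toR ℓ) x : ℝ) * Complex.I))
      = fun x => ∏ i, g i (x i) := by
    funext x
    by_cases hx : x ∈ Box3
    · have hx' : ∀ i, x i ∈ Icc (0:ℝ) (2*Real.pi) := fun i => hx i (Set.mem_univ i)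
      rw [Set.indicator_of_mem hx]
      have : ∀ i, g i (x i) = Complex.exp ((ℓ i : ℂ) * (x i) * Complex.I) := fun i =>
        Set.indicator_of_mem (hx' i) _
      simp_rw [this, ← Complex.exp_sum]
      congr 1
      rw [dot3]
      push_cast
      rw [Finset.sum_mul]
      exact Finset.sum_congr rfl fun j _ => by simp [toR]
    · rw [Set.indicator_of_notMem hx]
      rw [Box3, Set.mem_univ_pi] at hx
      push_neg at hx
      obtain ⟨i, hi⟩ := hx
      exact (Finset.prod_eq_zero (Finset.mem_univ i) (Set.indicator_of_notMem hi _)).symm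
  have hint : IntegrableOn (fun x => Complex.exp ((dot3 (toR ℓ) x : ℝ) * Complex.I)) Box3 := by
    have h2 : Continuous fun x : V3 => Complex.exp ((dot3 (toR ℓ) x : ℝ) * Complex.I) :=
      Complex.continuous_exp.comp
        ((Complex.continuous_ofReal.comp (continuous_dot3 _)).mul continuous_const)
    exact h2.continuousOn.integrableOn_compact box3_compact
  have key : (∫ x in Box3, Complex.exp ((dot3 (toR ℓ) x : ℝ) * Complex.I)) = 0 := by
    rw [← integral_indicator box3_measurable, hfact,
      MeasureTheory.integral_fintype_prod_volume_eq_prod g]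
    obtain ⟨i, hi⟩ := Function.ne_iff.1 hl
    refine Finset.prod_eq_zero (Finset.mem_univ i) ?_
    rw [hg]
    simp only []
    rw [MeasureTheory.integral_indicator measurableSet_Icc]
    exact factor_zero (ℓ i) hi
  calc (∫ x in Box3, Real.sin (dot3 (toR ℓ) x))
      = ∫ x in Box3, (Complex.exp ((dot3 (toR ℓ) x : ℝ) * Complex.I)).im := by
        simp_rw [Complex.exp_ofReal_mul_I_im]
    _ = (∫ x in Box3, Complex.exp ((dot3 (toR ℓ) x : ℝ) * Complex.I)).im :=
        integral_im hint
    _ = 0 := by rw [key]; rfl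

def wField (m n : Fin 3 → ℤ) (a b : V3) : V3 → V3 := fun x =>
  (1/2:ℝ) • (Real.sin (dot3 (toR (m-n)) x) •
      proj3 (toR (m-n)) (dot3 a (toR n) • b - dot3 b (toR m) • a)
    - Real.sin (dot3 (toR (m+n)) x) •
      proj3 (toR (m+n)) (dot3 a (toR n) • b + dot3 b (toR m) • a))

def pFun (m n : Fin 3 → ℤ) (a b : V3) : V3 → ℝ := fun x =>
  (1/2:ℝ) * ((dot3 (dot3 a (toR n) • b + dot3 b (toR m) • a) (toR (m+n))
        / dot3 (toR (m+n)) (toR (m+n))) * Real.cos (dot3 (toR (m+n)) x)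
    - (dot3 (dot3 a (toR n) • b - dot3 b (toR m) • a) (toR (m-n))
        / dot3 (toR (m-n)) (toR (m-n))) * Real.cos (dot3 (toR (m-n)) x))

lemma hasFDerivAt_sin_smul (ℓ : Fin 3 → ℤ) (c : V3) (x : V3) :
    HasFDerivAt (fun y => Real.sin (dot3 (toR ℓ) y) • c)
      ((Real.cos (dot3 (toR ℓ) x) • dotL (toR ℓ)).smulRight c) x :=
  ((hasFDerivAt_dot3 _ x).sin).smul_const c

lemma hasFDerivAt_wField (m n : Fin 3 → ℤ) (a b : V3) (x : V3) :
    HasFDerivAt (wField m n a b)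
      ((1/2:ℝ) • ((Real.cos (dot3 (toR (m-n)) x) • dotL (toR (m-n))).smulRight
          (proj3 (toR (m-n)) (dot3 a (toR n) • b - dot3 b (toR m) • a))
        - (Real.cos (dot3 (toR (m+n)) x) • dotL (toR (m+n))).smulRight
          (proj3 (toR (m+n)) (dot3 a (toR n) • b + dot3 b (toR m) • a)))) x :=
  ((hasFDerivAt_sin_smul (m-n) _ x).sub (hasFDerivAt_sin_smul (m+n) _ x)).const_smul (1/2:ℝ)

lemma integrableOn_sin_smul (ℓ : Fin 3 → ℤ) (c : V3) :
    IntegrableOn (fun x => Real.sin (dot3 (toR ℓ) x) • c) Box3 :=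
  (((Real.continuous_sin.comp (continuous_dot3 _)).smul
    continuous_const).continuousOn).integrableOn_compact box3_compact


/-- For `u(x) = a cos⟨m,x⟩ + b cos⟨n,x⟩` with `a ⊥ m`, `b ⊥ n`,
the Leray projection `B(u)` exists and satisfies
`2 B(u)(x) = sin⟨m−n,x⟩ P_{m−n}(⟨a,n⟩b − ⟨b,m⟩a) − sin⟨m+n,x⟩ P_{m+n}(⟨a,n⟩b + ⟨b,m⟩a)`. -/
theorem Bop_cos_cos (m n : Fin 3 → ℤ) (hm : m ≠ 0) (hn : n ≠ 0) (a b : V3)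
    (ha : dot3 a (toR m) = 0) (hb : dot3 b (toR n) = 0) :
    ∃ w : V3 → V3,
      IsLeray (fun x => Real.cos (dot3 (toR m) x) • a + Real.cos (dot3 (toR n) x) • b) w ∧
      ∀ x, (2 : ℝ) • w x =
        Real.sin (dot3 (toR (m - n)) x) •
          proj3 (toR (m - n)) (dot3 a (toR n) • b - dot3 b (toR m) • a) -
        Real.sin (dot3 (toR (m + n)) x) •
          proj3 (toR (m + n)) (dot3 a (toR n) • b + dot3 b (toR m) • a) := by
  classical
  refine ⟨wField m n a b, ⟨⟨?cd, ?per, ?df, ?zm⟩, pFun m n a b, ?pcd, ?pper, ?grad⟩, ?eq⟩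
  case cd =>
    exact contDiff_const.fun_smul
      ((((Real.contDiff_sin.comp (contDiff_dot3 _)).fun_smul contDiff_const)).sub
        (((Real.contDiff_sin.comp (contDiff_dot3 _)).fun_smul contDiff_const)))
  case per =>
    intro x k
    simp only [wField, per_sin]
  case df =>
    intro x
    rw [(hasFDerivAt_wField m n a b x).fderiv]
    have h1 := dot3_proj (toR (m-n)) (dot3 a (toR n) • b - dot3 b (toR m) • a)
    have h2 := dot3_proj (toR (m+n)) (dot3 a (toR n) • b + dot3 b (toR m) • a)
    rw [dot3] at h1 h2
    simp only [ContinuousLinearMap.coe_smul', Pi.smul_apply, ContinuousLinearMap.coe_sub',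
      Pi.sub_apply, ContinuousLinearMap.smulRight_apply, ContinuousLinearMap.smul_apply,
      dotL_apply, dot3_single, smul_eq_mul]
    rw [Fin.sum_univ_three] at h1 h2 ⊢
    linear_combination (Real.cos (dot3 (toR (m-n)) x)/2) * h1
      - (Real.cos (dot3 (toR (m+n)) x)/2) * h2
  case zm =>
    show (∫ x in Box3, wField m n a b x) = 0
    simp only [wField]
    rw [integral_smul, integral_sub (integrableOn_sin_smul _ _) (integrableOn_sin_smul _ _),
      integral_smul_const, integral_smul_const, integral_sin_dot_zero, integral_sin_dot_zero]
    simp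
  case pcd =>
    exact contDiff_const.mul
      ((contDiff_const.mul (Real.contDiff_cos.comp (contDiff_dot3 _))).sub
        (contDiff_const.mul (Real.contDiff_cos.comp (contDiff_dot3 _))))
  case pper =>
    intro x k
    simp only [pFun, per_cos]
  case grad =>
    intro x
    have ha' : dot3 (toR m) a = 0 := by rw [dot3_comm]; exact ha
    have hb' : dot3 (toR n) b = 0 := by rw [dot3_comm]; exact hb
    have hU : HasFDerivAt
        (fun x => Real.cos (dot3 (toR m) x) • a + Real.cos (dot3 (toR n) x) • b)
        (((-Real.sin (dot3 (toR m) x)) • dotL (toR m)).smulRight a +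
          ((-Real.sin (dot3 (toR n) x)) • dotL (toR n)).smulRight b) x :=
      (((hasFDerivAt_dot3 _ x).cos).smul_const a).add (((hasFDerivAt_dot3 _ x).cos).smul_const b)
    set qp := dot3 (dot3 a (toR n) • b + dot3 b (toR m) • a) (toR (m+n))
        / dot3 (toR (m+n)) (toR (m+n)) with hqp
    set qm := dot3 (dot3 a (toR n) • b - dot3 b (toR m) • a) (toR (m-n))
        / dot3 (toR (m-n)) (toR (m-n)) with hqm
    have hP0 := ((((hasFDerivAt_dot3 (toR (m+n)) x).cos).const_mul qp).sub
      (((hasFDerivAt_dot3 (toR (m-n)) x).cos).const_mul qm)).const_mul (1/2:ℝ)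
    have hP : HasFDerivAt (pFun m n a b)
        ((1/2:ℝ) • (qp • ((-Real.sin (dot3 (toR (m+n)) x)) • dotL (toR (m+n))) -
          qm • ((-Real.sin (dot3 (toR (m-n)) x)) • dotL (toR (m-n))))) x := hP0
    funext i
    rw [convTerm, hU.fderiv]
    have hgr : grad3 (pFun m n a b) x i = fderiv ℝ (pFun m n a b) x (Pi.single i 1) := rfl
    rw [Pi.sub_apply, hgr, hP.fderiv]
    have kM := sin_proj_key (m-n) (dot3 a (toR n) • b - dot3 b (toR m) • a) x i
    have kP := sin_proj_key (m+n) (dot3 a (toR n) • b + dot3 b (toR m) • a) x i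
    have e1 : dot3 (toR (m-n)) x = dot3 (toR m) x - dot3 (toR n) x := by
      rw [toR_sub, dot3_sub_left]
    have e2 : dot3 (toR (m+n)) x = dot3 (toR m) x + dot3 (toR n) x := by
      rw [toR_add, dot3_add_left]
    simp only [wField, ContinuousLinearMap.add_apply, ContinuousLinearMap.smulRight_apply,
      ContinuousLinearMap.smul_apply, ContinuousLinearMap.coe_smul', ContinuousLinearMap.coe_sub',
      Pi.smul_apply, Pi.sub_apply, Pi.add_apply, smul_eq_mul, dotL_apply, dot3_single,
      dot3_add_right, dot3_smul_right, ha', hb']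
    simp only [Pi.sub_apply, Pi.add_apply, Pi.smul_apply, smul_eq_mul] at kM kP
    rw [← hqm] at kM
    rw [← hqp] at kP
    rw [e1, Real.sin_sub] at kM
    rw [e2, Real.sin_add] at kP
    rw [e1, e2, Real.sin_sub, Real.sin_add, dot3_comm (toR m) b, dot3_comm (toR n) a]
    linear_combination (-(1/2:ℝ)) * kM + (1/2:ℝ) * kP
  case eq =>
    intro x
    show (2:ℝ) • ((1/2:ℝ) • _) = _
    rw [smul_smul]
    norm_num
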